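/- arXiv:2512.15975 — 2 statements merged into one kernel-verified Lean document; each statement's English description precedes it below -/
import Mathlib

section
/- The map T : {0,1} → {0,1}, T(x) = 1 − x, satisfies d(Ta,Tb) ≤ 0.9·[d(a,Ta) + d(b,Tb)] + 0.09·√(d(a,b)·min{d(a,Ta), d(b,Tb)}) for all a, b ∈ {0,1} with d(x,y) = |x−y|, and T has no fixed point. -/
/-! `T` is an isometry of `{0, 1}` that moves every point by exactly `1`, while the space has
diameter `1`. Hence `d(Ta, Tb) = d(a, b) ≤ 1 < 1.8 = 0.9 · (d(a, Ta) + d(b, Tb))`, and the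
square-root term is nonnegative; a fixed point would have displacement `0`. -/

lemma Int.dist_one_sub_self_of_mem_zero_one {x : ℤ} (hx : x ∈ ({0, 1} : Set ℤ)) :
    dist x (1 - x) = 1 := by
  rcases hx with rfl | rfl <;> norm_num [Int.dist_eq]

lemma Int.dist_le_one_of_mem_zero_one {a b : ℤ} (ha : a ∈ ({0, 1} : Set ℤ))
    (hb : b ∈ ({0, 1} : Set ℤ)) : dist a b ≤ 1 := by
  rcases ha with rfl | rfl <;> rcases hb with rfl | rfl <;> norm_num [Int.dist_eq]

theorem flip_map_satisfies_inequality_no_fixed_point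
    (T : ({0, 1} : Set ℤ) → ({0, 1} : Set ℤ))
    (hT : ∀ x, (T x : ℤ) = 1 - (x : ℤ)) :
    (∀ a b, dist (T a) (T b) ≤
      0.9 * (dist a (T a) + dist b (T b)) +
      0.09 * Real.sqrt (dist a b * min (dist a (T a)) (dist b (T b)))) ∧
    (∀ x, T x ≠ x) := by
  have displacement : ∀ x, dist x (T x) = 1 := fun x => by
    rw [Subtype.dist_eq, hT]
    exact Int.dist_one_sub_self_of_mem_zero_one x.2
  have isometry : ∀ a b, dist (T a) (T b) = dist a b := fun a b => by
    rw [Subtype.dist_eq, Subtype.dist_eq, hT, hT, dist_sub_left]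
  refine ⟨fun a b => ?_, fun x hx => ?_⟩
  · have diam_le : dist a b ≤ 1 := Int.dist_le_one_of_mem_zero_one a.2 b.2
    rw [isometry, displacement, displacement]
    linarith [Real.sqrt_nonneg (dist a b * min (1 : ℝ) 1)]
  · simpa [hx] using displacement x
end

section
/- Let (X,d) be a metric space and f : X → X satisfy d(fx,fy) ≤ c·max{d(x,y), d(x,fx), d(y,fy), d(x,fy), d(y,fx)} for all x,y with 0 ≤ c < 1/2. Then for any x₀ ∈ X, the orbit x_{n+1} = f(x_n) satisfies d(x_{n+1}, x_{n+2}) ≤ (c/(1−c))·d(x_n, x_{n+1}) for all n, and hence is a Cauchy sequence. -/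
/-!
Taking `y = f x` in the quasi-contraction inequality, every distance in the maximum is bounded by
`d(x, fx) + d(fx, f²x)` (the term `d(x, f²x)` by the triangle inequality, the term `d(fx, fx)`
vanishes), so `d(fx, f²x) ≤ c (d(x, fx) + d(fx, f²x))`, i.e. `d(fx, f²x) ≤ c/(1-c) · d(x, fx)`.
Successive distances along an orbit therefore decay geometrically with ratio `c/(1-c) < 1`,
which makes the orbit Cauchy.
-/

section Geometric

variable {α : Type*} [PseudoMetricSpace α] {u : ℕ → α} {r : ℝ}

theorem dist_succ_le_geometric_of_dist_succ_le_mul (hr0 : 0 ≤ r)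
    (h : ∀ n, dist (u (n + 1)) (u (n + 2)) ≤ r * dist (u n) (u (n + 1))) (n : ℕ) :
    dist (u n) (u (n + 1)) ≤ dist (u 0) (u 1) * r ^ n := by
  induction n with
  | zero => simp
  | succ n ih =>
    calc dist (u (n + 1)) (u (n + 2)) ≤ r * dist (u n) (u (n + 1)) := h n
      _ ≤ r * (dist (u 0) (u 1) * r ^ n) := mul_le_mul_of_nonneg_left ih hr0
      _ = dist (u 0) (u 1) * r ^ (n + 1) := by ring

theorem cauchySeq_of_dist_succ_le_mul (hr0 : 0 ≤ r) (hr1 : r < 1)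
    (h : ∀ n, dist (u (n + 1)) (u (n + 2)) ≤ r * dist (u n) (u (n + 1))) : CauchySeq u :=
  cauchySeq_of_le_geometric r _ hr1 (dist_succ_le_geometric_of_dist_succ_le_mul hr0 h)

end Geometric

section QuasiContraction

variable {X : Type*} [PseudoMetricSpace X] {f : X → X} {c : ℝ}

def IsQuasiContraction (f : X → X) (c : ℝ) : Prop :=
  ∀ x y : X, dist (f x) (f y) ≤
    c * max (dist x y) (max (dist x (f x)) (max (dist y (f y))
      (max (dist x (f y)) (dist y (f x)))))

theorem IsQuasiContraction.dist_map_map_le (hf : IsQuasiContraction f c) (hc0 : 0 ≤ c) (x : X) :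
    dist (f x) (f (f x)) ≤ c * (dist x (f x) + dist (f x) (f (f x))) := by
  have hmax : max (dist x (f x)) (max (dist x (f x)) (max (dist (f x) (f (f x)))
      (max (dist x (f (f x))) (dist (f x) (f x))))) ≤
      dist x (f x) + dist (f x) (f (f x)) := by
    have h₁ := dist_nonneg (x := x) (y := f x)
    have h₂ := dist_nonneg (x := f x) (y := f (f x))
    rw [dist_self]
    refine max_le (by linarith) (max_le (by linarith) (max_le (by linarith) (max_le ?_ ?_)))
    · exact dist_triangle _ _ _
    · linarith
  exact (hf x (f x)).trans (mul_le_mul_of_nonneg_left hmax hc0)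

theorem IsQuasiContraction.dist_map_map_le_div (hf : IsQuasiContraction f c) (hc0 : 0 ≤ c)
    (hc1 : c < 1) (x : X) :
    dist (f x) (f (f x)) ≤ c / (1 - c) * dist x (f x) := by
  have hstep := hf.dist_map_map_le hc0 x
  rw [div_mul_eq_mul_div, le_div_iff₀ (by linarith)]
  linarith

end QuasiContraction

theorem quasi_contraction_orbit_decay_cauchy
    {X : Type*} [MetricSpace X]
    (f : X → X) (c : ℝ) (hc0 : 0 ≤ c) (hc : c < 1 / 2)
    (h : ∀ x y : X, dist (f x) (f y) ≤
      c * max (dist x y) (max (dist x (f x)) (max (dist y (f y))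
        (max (dist x (f y)) (dist y (f x))))))
    (x : ℕ → X) (hx : ∀ n, x (n + 1) = f (x n)) :
    (∀ n, dist (x (n + 1)) (x (n + 2)) ≤
      (c / (1 - c)) * dist (x n) (x (n + 1))) ∧ CauchySeq x := by
  have hf : IsQuasiContraction f c := h
  have hdecay : ∀ n, dist (x (n + 1)) (x (n + 2)) ≤ c / (1 - c) * dist (x n) (x (n + 1)) := by
    intro n
    have hx₂ : x (n + 2) = f (f (x n)) := by rw [← hx, ← hx]
    rw [hx₂, hx n]
    exact hf.dist_map_map_le_div hc0 (by linarith) (x n)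
  have hr0 : 0 ≤ c / (1 - c) := div_nonneg hc0 (by linarith)
  have hr1 : c / (1 - c) < 1 := (div_lt_one (by linarith)).mpr (by linarith)
  exact ⟨hdecay, cauchySeq_of_dist_succ_le_mul hr0 hr1 hdecay⟩
end
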